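/- Let A ∈ {0,1} and Y, Z, W, M, D, X be random variables. Suppose h2(W,M,D,X) and h1(W,D,X) are integrable measurable functions satisfying E[Y − h2 | A=1, M, D, Z, X] = 0 and E[h2 − h1 | A=0, D, Z, X] = 0 a.s., and q0(Z,X) is an integrable measurable function satisfying E[A·q0 − 1 | W, X] = 0 a.s. Then for ANY bounded measurable functions h0'(W,X), q1'(Z,D,X), q2'(Z,M,D,X), one has E[ A·q0·(h1 − h0') + (1−A)·q1'·(h2 − h1) + A·q2'·(Y − h2) + h0' ] = E[A·q0(Z,X)·h1(W,D,X)]. -/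

import Mathlib

open MeasureTheory ProbabilityTheory
open scoped MeasureTheory ProbabilityTheory

/-! Rearranging, the augmented integrand equals
`A q0 h1 − h0'·(A q0 − 1) + 1{A=0}·q1'·(h2 − h1) + 1{A=1}·q2'·(Y − h2)`.
In each of the last three terms a bounded function, measurable for some σ-algebra `m`, multiplies
a residual whose conditional expectation given `m` vanishes (under `μ`, `μ[|A = 0]` and
`μ[|A = 1]` respectively), so by the tower property each of them integrates to zero. -/

section

variable {Ω : Type*}

lemma stronglyMeasurable_comap_comp {β : Type*} [MeasurableSpace β] {V : Ω → β} {φ : β → ℝ}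
    (hφ : Measurable φ) :
    StronglyMeasurable[MeasurableSpace.comap V inferInstance] (fun ω => φ (V ω)) :=
  (hφ.comp (comap_measurable V)).stronglyMeasurable

lemma MeasureTheory.Integrable.mul_of_abs_le [MeasurableSpace Ω] {μ : Measure Ω} {f g : Ω → ℝ}
    {C : ℝ} (hg : Integrable g μ) (hf : Measurable f) (hfC : ∀ ω, |f ω| ≤ C) :
    Integrable (fun ω => f ω * g ω) μ :=
  hg.bdd_mul hf.aestronglyMeasurable (Filter.Eventually.of_forall hfC)

lemma integral_mul_eq_zero_of_condExp_eq_zero {m : MeasurableSpace Ω} [mΩ : MeasurableSpace Ω]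
    (hm : m ≤ mΩ) {ν : Measure Ω} [IsFiniteMeasure ν] {f g : Ω → ℝ} {C : ℝ}
    (hf : StronglyMeasurable[m] f) (hfC : ∀ ω, |f ω| ≤ C) (hg : Integrable g ν)
    (hg0 : ν[g|m] =ᵐ[ν] 0) :
    ∫ ω, f ω * g ω ∂ν = 0 := by
  have hfg : ν[f * g|m] =ᵐ[ν] 0 := by
    filter_upwards [condExp_mul_of_stronglyMeasurable_left hf
      (hg.mul_of_abs_le (hf.mono hm).measurable hfC) hg, hg0] with ω hω hω0
    rw [hω, Pi.mul_apply, hω0, Pi.zero_apply, mul_zero]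
  calc ∫ ω, f ω * g ω ∂ν = ∫ ω, ν[f * g|m] ω ∂ν := (integral_condExp hm).symm
    _ = 0 := by simp [integral_congr_ae hfg]

lemma measure_smul_cond [MeasurableSpace Ω] (μ : Measure Ω) [IsFiniteMeasure μ] (s : Set Ω) :
    μ s • μ[|s] = μ.restrict s := by
  rcases eq_or_ne (μ s) 0 with h | h
  · simp [h, Measure.restrict_eq_zero.mpr h]
  · rw [ProbabilityTheory.cond, smul_smul, ENNReal.mul_inv_cancel h (measure_ne_top μ s),
      one_smul]

lemma setIntegral_mul_eq_zero_of_condExp_cond_eq_zero {m : MeasurableSpace Ω}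
    [mΩ : MeasurableSpace Ω] (hm : m ≤ mΩ) {μ : Measure Ω} [IsFiniteMeasure μ] {s : Set Ω}
    {f g : Ω → ℝ} {C : ℝ} (hf : StronglyMeasurable[m] f) (hfC : ∀ ω, |f ω| ≤ C)
    (hg : Integrable g μ) (hg0 : μ[|s][g|m] =ᵐ[μ[|s]] 0) :
    ∫ ω in s, f ω * g ω ∂μ = 0 := by
  rcases eq_or_ne (μ s) 0 with hs | hs
  · simp [Measure.restrict_eq_zero.mpr hs]
  have hg_cond : Integrable g μ[|s] := hg.restrict.smul_measure (ENNReal.inv_ne_top.mpr hs)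
  rw [← measure_smul_cond, integral_smul_measure,
    integral_mul_eq_zero_of_condExp_eq_zero hm hf hfC hg_cond hg0, smul_zero]

lemma mul_eq_indicator_of_eq_zero_or_eq_one {A : Ω → ℝ} (hA : ∀ ω, A ω = 0 ∨ A ω = 1)
    (G : Ω → ℝ) : (fun ω => A ω * G ω) = {ω | A ω = 1}.indicator G := by
  ext ω
  rcases hA ω with h | h <;> simp [Set.indicator, h]

lemma one_sub_mul_eq_indicator_of_eq_zero_or_eq_one {A : Ω → ℝ}
    (hA : ∀ ω, A ω = 0 ∨ A ω = 1) (G : Ω → ℝ) :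
    (fun ω => (1 - A ω) * G ω) = {ω | A ω = 0}.indicator G := by
  ext ω
  rcases hA ω with h | h <;> simp [Set.indicator, h]

end

theorem stmt9_general
    {Ω : Type*} [mΩ : MeasurableSpace Ω] (μ : Measure Ω) [IsProbabilityMeasure μ]
    (A Y Z W M D X : Ω → ℝ)
    (hA : Measurable A) (hZ : Measurable Z) (hW : Measurable W)
    (hM : Measurable M) (hD : Measurable D) (hX : Measurable X)
    (hA01 : ∀ ω, A ω = 0 ∨ A ω = 1)
    (h2 : ℝ × ℝ × ℝ × ℝ → ℝ)
    (hh2int : Integrable (fun ω => h2 (W ω, M ω, D ω, X ω)) μ)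
    (h1 : ℝ × ℝ × ℝ → ℝ)
    (hh1int : Integrable (fun ω => h1 (W ω, D ω, X ω)) μ)
    (q0 : ℝ × ℝ → ℝ)
    (hq0int : Integrable (fun ω => q0 (Z ω, X ω)) μ)
    (hYint : Integrable Y μ)
    (mMDZX mDZX mWX : MeasurableSpace Ω)
    (hmMDZX : mMDZX = MeasurableSpace.comap (fun ω => (M ω, D ω, Z ω, X ω)) inferInstance)
    (hmDZX : mDZX = MeasurableSpace.comap (fun ω => (D ω, Z ω, X ω)) inferInstance)
    (hmWX : mWX = MeasurableSpace.comap (fun ω => (W ω, X ω)) inferInstance)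
    -- E[Y − h2 | A=1, M, D, Z, X] = 0
    (ha : ((μ[|{ω | A ω = 1}])[(fun ω => Y ω - h2 (W ω, M ω, D ω, X ω)) | mMDZX])
        =ᵐ[μ[|{ω | A ω = 1}]] 0)
    -- E[h2 − h1 | A=0, D, Z, X] = 0
    (hb : ((μ[|{ω | A ω = 0}])[(fun ω => h2 (W ω, M ω, D ω, X ω) - h1 (W ω, D ω, X ω)) | mDZX])
        =ᵐ[μ[|{ω | A ω = 0}]] 0)
    -- E[A q0 − 1 | W, X] = 0
    (hd : (μ[(fun ω => A ω * q0 (Z ω, X ω) - 1) | mWX]) =ᵐ[μ] 0)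
    (hAq0h1 : Integrable (fun ω => A ω * q0 (Z ω, X ω) * h1 (W ω, D ω, X ω)) μ) :
    ∀ (h0' : ℝ × ℝ → ℝ) (q1' : ℝ × ℝ × ℝ → ℝ) (q2' : ℝ × ℝ × ℝ × ℝ → ℝ),
      Measurable h0' → (∃ C, ∀ p, |h0' p| ≤ C) →
      Measurable q1' → (∃ C, ∀ p, |q1' p| ≤ C) →
      Measurable q2' → (∃ C, ∀ p, |q2' p| ≤ C) →
      Integrable (fun ω =>
        A ω * q0 (Z ω, X ω) * (h1 (W ω, D ω, X ω) - h0' (W ω, X ω))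
          + (1 - A ω) * q1' (Z ω, D ω, X ω)
              * (h2 (W ω, M ω, D ω, X ω) - h1 (W ω, D ω, X ω))
          + A ω * q2' (Z ω, M ω, D ω, X ω) * (Y ω - h2 (W ω, M ω, D ω, X ω))
          + h0' (W ω, X ω)) μ →
      ∫ ω, (A ω * q0 (Z ω, X ω) * (h1 (W ω, D ω, X ω) - h0' (W ω, X ω))
          + (1 - A ω) * q1' (Z ω, D ω, X ω)
              * (h2 (W ω, M ω, D ω, X ω) - h1 (W ω, D ω, X ω))
          + A ω * q2' (Z ω, M ω, D ω, X ω) * (Y ω - h2 (W ω, M ω, D ω, X ω))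
          + h0' (W ω, X ω)) ∂μ
        = ∫ ω, A ω * q0 (Z ω, X ω) * h1 (W ω, D ω, X ω) ∂μ := by
  subst hmMDZX hmDZX hmWX
  rintro h0' q1' q2' hh0' ⟨C0, hC0⟩ hq1' ⟨C1, hC1⟩ hq2' ⟨C2, hC2⟩ -
  set weight := fun ω => A ω * q0 (Z ω, X ω) - 1
  set control := fun ω => q1' (Z ω, D ω, X ω) * (h2 (W ω, M ω, D ω, X ω) - h1 (W ω, D ω, X ω))
  set treated := fun ω => q2' (Z ω, M ω, D ω, X ω) * (Y ω - h2 (W ω, M ω, D ω, X ω))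
  have hweight_int : Integrable weight μ :=
    (hq0int.mul_of_abs_le (C := 1) hA fun ω => by rcases hA01 ω with h | h <;> simp [h]).sub
      (integrable_const 1)
  have hh0'_int : Integrable (fun ω => h0' (W ω, X ω) * weight ω) μ :=
    hweight_int.mul_of_abs_le (by fun_prop) fun ω => hC0 _
  have hcontrol_int : Integrable control μ :=
    (hh2int.sub hh1int).mul_of_abs_le (by fun_prop) fun ω => hC1 _
  have htreated_int : Integrable treated μ :=
    (hYint.sub hh2int).mul_of_abs_le (by fun_prop) fun ω => hC2 _
  have hh0'_zero : ∫ ω, h0' (W ω, X ω) * weight ω ∂μ = 0 :=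
    integral_mul_eq_zero_of_condExp_eq_zero (hW.prodMk hX).comap_le
      (stronglyMeasurable_comap_comp hh0') (fun ω => hC0 _) hweight_int hd
  have hcontrol_zero : ∫ ω in {ω | A ω = 0}, control ω ∂μ = 0 :=
    setIntegral_mul_eq_zero_of_condExp_cond_eq_zero (hD.prodMk (hZ.prodMk hX)).comap_le
      (stronglyMeasurable_comap_comp (V := fun ω => (D ω, Z ω, X ω))
        (φ := fun p => q1' (p.2.1, p.1, p.2.2)) (by fun_prop))
      (fun ω => hC1 _) (hh2int.sub hh1int) hb
  have htreated_zero : ∫ ω in {ω | A ω = 1}, treated ω ∂μ = 0 :=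
    setIntegral_mul_eq_zero_of_condExp_cond_eq_zero
      (hM.prodMk (hD.prodMk (hZ.prodMk hX))).comap_le
      (stronglyMeasurable_comap_comp (V := fun ω => (M ω, D ω, Z ω, X ω))
        (φ := fun p => q2' (p.2.2.1, p.1, p.2.1, p.2.2.2)) (by fun_prop))
      (fun ω => hC2 _) (hYint.sub hh2int) ha
  have hA0 : MeasurableSet {ω | A ω = 0} := hA (measurableSet_singleton 0)
  have hA1 : MeasurableSet {ω | A ω = 1} := hA (measurableSet_singleton 1)
  calc _ = ∫ ω, A ω * q0 (Z ω, X ω) * h1 (W ω, D ω, X ω) - h0' (W ω, X ω) * weight ω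
          + {ω | A ω = 0}.indicator control ω + {ω | A ω = 1}.indicator treated ω ∂μ := by
        congr 1 with ω
        rw [← congrFun (one_sub_mul_eq_indicator_of_eq_zero_or_eq_one hA01 control) ω,
          ← congrFun (mul_eq_indicator_of_eq_zero_or_eq_one hA01 treated) ω]
        ring
    _ = _ := by
        rw [integral_add ?_ (htreated_int.indicator hA1),
          integral_add ?_ (hcontrol_int.indicator hA0), integral_sub hAq0h1 hh0'_int,
          integral_indicator hA0, integral_indicator hA1, hh0'_zero, hcontrol_zero,
          htreated_zero, sub_zero, add_zero, add_zero]
        · exact hAq0h1.sub hh0'_int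
        · exact (hAq0h1.sub hh0'_int).add (hcontrol_int.indicator hA0)

/-- if `h2, h1` solve their outcome bridge equations and `q0` solves its
treatment bridge equation, then for ANY bounded measurable `h0', q1', q2'` the
augmented functional equals the hybrid formula `E[A·q0·h1]`. -/
theorem stmt9
    {Ω : Type*} [mΩ : MeasurableSpace Ω] (μ : Measure Ω) [IsProbabilityMeasure μ]
    (A Y Z W M D X : Ω → ℝ)
    (hA : Measurable A) (hY : Measurable Y) (hZ : Measurable Z) (hW : Measurable W)
    (hM : Measurable M) (hD : Measurable D) (hX : Measurable X)
    (hA01 : ∀ ω, A ω = 0 ∨ A ω = 1)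
    (h2 : ℝ × ℝ × ℝ × ℝ → ℝ) (hh2 : Measurable h2)
    (hh2int : Integrable (fun ω => h2 (W ω, M ω, D ω, X ω)) μ)
    (h1 : ℝ × ℝ × ℝ → ℝ) (hh1 : Measurable h1)
    (hh1int : Integrable (fun ω => h1 (W ω, D ω, X ω)) μ)
    (q0 : ℝ × ℝ → ℝ) (hq0 : Measurable q0)
    (hq0int : Integrable (fun ω => q0 (Z ω, X ω)) μ)
    (hYint : Integrable Y μ)
    (mMDZX mDZX mWX : MeasurableSpace Ω)
    (hmMDZX : mMDZX = MeasurableSpace.comap (fun ω => (M ω, D ω, Z ω, X ω)) inferInstance)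
    (hmDZX : mDZX = MeasurableSpace.comap (fun ω => (D ω, Z ω, X ω)) inferInstance)
    (hmWX : mWX = MeasurableSpace.comap (fun ω => (W ω, X ω)) inferInstance)
    -- E[Y − h2 | A=1, M, D, Z, X] = 0
    (ha : ((μ[|{ω | A ω = 1}])[(fun ω => Y ω - h2 (W ω, M ω, D ω, X ω)) | mMDZX])
        =ᵐ[μ[|{ω | A ω = 1}]] 0)
    -- E[h2 − h1 | A=0, D, Z, X] = 0
    (hb : ((μ[|{ω | A ω = 0}])[(fun ω => h2 (W ω, M ω, D ω, X ω) - h1 (W ω, D ω, X ω)) | mDZX])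
        =ᵐ[μ[|{ω | A ω = 0}]] 0)
    -- E[A q0 − 1 | W, X] = 0
    (hd : (μ[(fun ω => A ω * q0 (Z ω, X ω) - 1) | mWX]) =ᵐ[μ] 0)
    (hAq0h1 : Integrable (fun ω => A ω * q0 (Z ω, X ω) * h1 (W ω, D ω, X ω)) μ) :
    ∀ (h0' : ℝ × ℝ → ℝ) (q1' : ℝ × ℝ × ℝ → ℝ) (q2' : ℝ × ℝ × ℝ × ℝ → ℝ),
      Measurable h0' → (∃ C, ∀ p, |h0' p| ≤ C) →
      Measurable q1' → (∃ C, ∀ p, |q1' p| ≤ C) →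
      Measurable q2' → (∃ C, ∀ p, |q2' p| ≤ C) →
      Integrable (fun ω =>
        A ω * q0 (Z ω, X ω) * (h1 (W ω, D ω, X ω) - h0' (W ω, X ω))
          + (1 - A ω) * q1' (Z ω, D ω, X ω)
              * (h2 (W ω, M ω, D ω, X ω) - h1 (W ω, D ω, X ω))
          + A ω * q2' (Z ω, M ω, D ω, X ω) * (Y ω - h2 (W ω, M ω, D ω, X ω))
          + h0' (W ω, X ω)) μ →
      ∫ ω, (A ω * q0 (Z ω, X ω) * (h1 (W ω, D ω, X ω) - h0' (W ω, X ω))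
          + (1 - A ω) * q1' (Z ω, D ω, X ω)
              * (h2 (W ω, M ω, D ω, X ω) - h1 (W ω, D ω, X ω))
          + A ω * q2' (Z ω, M ω, D ω, X ω) * (Y ω - h2 (W ω, M ω, D ω, X ω))
          + h0' (W ω, X ω)) ∂μ
        = ∫ ω, A ω * q0 (Z ω, X ω) * h1 (W ω, D ω, X ω) ∂μ :=
  stmt9_general (mΩ := mΩ) μ A Y Z W M D X hA hZ hW hM hD hX hA01 h2 hh2int h1 hh1int q0 hq0int
    hYint mMDZX mDZX mWX hmMDZX hmDZX hmWX ha hb hd hAq0h1
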